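/- On the region {(α,β) ∈ ℝ² : λ_k < α < λ_{k+1}, α ≤ β}, the function m is locally Lipschitz continuous and strictly decreasing in each variable: if α₁ ≤ α₂, β₁ ≤ β₂ and (α₁,β₁) ≠ (α₂,β₂) then m(α₂,β₂) < m(α₁,β₁). Moreover, for every α with λ_k < α < λ_{k+1} one has m(α,α) = ½(λ_{k+1} − α) > 0. -/

import Mathlib

/-!
Everything rests on the identity `J_{a',b'} = J_{a,b} - ((a'-a)‖u⁺‖² + (b'-b)‖u⁻‖²)/2`.
On the unit sphere of `V₂`, comparing `J̃_{a,b}(v)` with `J_{a,b}(v)` bounds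
`(a - λ_k)‖M_{a,b} v‖² ≤ b - a`, so `‖M_{a,b} v + v‖²_{L²}` stays bounded near any point and
the identity makes `m` locally Lipschitz. Strict monotonicity needs `‖u⁺‖` and `‖u⁻‖` bounded
below along `u = M_{a,b} v + v` for `v` of bounded energy. Maximality of `M_{a,b} v` in the
direction `φ₁` gives `(a - λ₁)⟨φ₁, u⁺⟩ = (b - λ₁)⟨φ₁, u⁻⟩`; if both pairings tended to `0`
along a sequence, compactness of the embedding would produce an `L²`-limit `z` with
`‖z‖ ≥ 1` and `⟨φ₁, |z|⟩ = 0`, impossible as `φ₁ > 0`. On the diagonal `J_{a,a}` splits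
orthogonally over `V₁ ⊕ V₂`, and `φ_{k+1}` attains the lower bound `(λ_{k+1} - a)/2`.
-/

open MeasureTheory RealInnerProductSpace Filter Topology

/-- The functional `J_{α,β}(u) = ½(B(u,u) - α∫_Ω (u⁺)² - β∫_Ω (u⁻)²)`, where the Hilbert
space `X₀` carries the Gagliardo-type inner product `B = ⟪·,·⟫` and `T : X₀ → L²(Ω)` is the
embedding into `L²(Ω)`; note `∫_Ω (u⁺)² = ‖(Tu)⁺‖²_{L²}`. -/
noncomputable def Jfun {Ω : Type*} [MeasurableSpace Ω] {μ : Measure Ω}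
    {X₀ : Type*} [NormedAddCommGroup X₀] [InnerProductSpace ℝ X₀]
    (T : X₀ →ₗ[ℝ] Lp ℝ 2 μ) (α β : ℝ) (u : X₀) : ℝ :=
  (⟪u, u⟫ - α * ‖Lp.posPart (T u)‖ ^ 2 - β * ‖Lp.negPart (T u)‖ ^ 2) / 2

namespace MeasureTheory.Lp

variable {α : Type*} [MeasurableSpace α] {μ : Measure α} {p : ENNReal}

theorem posPart_sub_negPart (f : Lp ℝ p μ) : posPart f - negPart f = f := by
  refine ext ?_
  filter_upwards [coeFn_sub (posPart f) (negPart f), coeFn_posPart f,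
    coeFn_negPart_eq_max f] with x h hpos hneg
  rw [h, Pi.sub_apply, hpos, hneg]
  rcases le_total (f x) 0 with hx | hx <;> simp [hx]

theorem posPart_nonneg (f : Lp ℝ p μ) : 0 ≤ᵐ[μ] posPart f :=
  (coeFn_posPart f).mono fun _ h => h ▸ le_max_right _ _

theorem negPart_nonneg (f : Lp ℝ p μ) : 0 ≤ᵐ[μ] negPart f :=
  posPart_nonneg (-f)

theorem norm_posPart_add_le (f g : Lp ℝ p μ) : ‖posPart (f + g)‖ ≤ ‖posPart f + g‖ := by
  refine norm_le_norm_of_ae_le ?_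
  filter_upwards [coeFn_posPart (f + g), coeFn_add f g, coeFn_add (posPart f) g,
    coeFn_posPart f] with x h₁ h₂ h₃ h₄
  rw [h₁, h₃, h₂, Pi.add_apply, Pi.add_apply, h₄, Real.norm_eq_abs, Real.norm_eq_abs,
    abs_of_nonneg (le_max_right _ _)]
  exact max_le ((add_le_add_left (le_max_left _ _) _).trans (le_abs_self _)) (abs_nonneg _)

theorem norm_negPart_add_le (f g : Lp ℝ p μ) : ‖negPart (f + g)‖ ≤ ‖negPart f - g‖ := by
  rw [negPart, neg_add, sub_eq_add_neg]
  exact norm_posPart_add_le (-f) (-g)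

theorem inner_eq_integral (f g : Lp ℝ 2 μ) : ⟪f, g⟫ = ∫ x, f x * g x ∂μ := by
  simp [L2.inner_def, mul_comm]

theorem inner_posPart_negPart (f : Lp ℝ 2 μ) : ⟪posPart f, negPart f⟫ = 0 := by
  rw [inner_eq_integral]
  refine integral_eq_zero_of_ae ?_
  filter_upwards [coeFn_posPart f, coeFn_negPart_eq_max f] with x hpos hneg
  rw [hpos, hneg]
  rcases le_total (f x) 0 with hx | hx <;> simp [hx]

theorem norm_posPart_sq_add_norm_negPart_sq (f : Lp ℝ 2 μ) :
    ‖posPart f‖ ^ 2 + ‖negPart f‖ ^ 2 = ‖f‖ ^ 2 := by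
  conv_rhs => rw [← posPart_sub_negPart f]
  rw [norm_sub_sq_real, inner_posPart_negPart]
  ring

theorem inner_posPart_sub_inner_negPart (g f : Lp ℝ 2 μ) :
    ⟪g, posPart f⟫ - ⟪g, negPart f⟫ = ⟪g, f⟫ := by
  rw [← inner_sub_right, posPart_sub_negPart]

theorem inner_nonneg_of_ae_nonneg {g h : Lp ℝ 2 μ} (hg : 0 ≤ᵐ[μ] g) (hh : 0 ≤ᵐ[μ] h) :
    0 ≤ ⟪g, h⟫ := by
  rw [inner_eq_integral]
  exact integral_nonneg_of_ae (by filter_upwards [hg, hh] with x h₁ h₂ using mul_nonneg h₁ h₂)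

theorem eq_zero_of_inner_eq_zero_of_ae_pos {g h : Lp ℝ 2 μ} (hg : ∀ᵐ x ∂μ, 0 < g x)
    (hh : 0 ≤ᵐ[μ] h) (hgh : ⟪g, h⟫ = 0) : h = 0 := by
  have hprod : 0 ≤ᵐ[μ] fun x => g x * h x := by
    filter_upwards [hg, hh] with x h₁ h₂ using mul_nonneg h₁.le h₂
  rw [inner_eq_integral, integral_eq_zero_iff_of_nonneg_ae hprod
    (by simpa [mul_comm] using L2.integrable_inner (𝕜 := ℝ) g h)] at hgh
  refine eq_zero_iff_ae_eq_zero.2 ?_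
  filter_upwards [hgh, hg] with x h₁ h₂
  exact (mul_eq_zero.1 h₁).resolve_left h₂.ne'

theorem inner_posPart_add_inner_negPart_pos {g f : Lp ℝ 2 μ} (hg : ∀ᵐ x ∂μ, 0 < g x)
    (hf : f ≠ 0) : 0 < ⟪g, posPart f⟫ + ⟪g, negPart f⟫ := by
  have hg' : 0 ≤ᵐ[μ] g := hg.mono fun _ h => h.le
  have hpos := inner_nonneg_of_ae_nonneg hg' (posPart_nonneg f)
  have hneg := inner_nonneg_of_ae_nonneg hg' (negPart_nonneg f)
  refine lt_of_le_of_ne (add_nonneg hpos hneg) fun h => hf ?_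
  rw [← posPart_sub_negPart f,
    eq_zero_of_inner_eq_zero_of_ae_pos hg (posPart_nonneg f) (by linarith),
    eq_zero_of_inner_eq_zero_of_ae_pos hg (negPart_nonneg f) (by linarith), sub_zero]

end MeasureTheory.Lp

theorem eq_zero_of_forall_mul_le_mul_sq {D C : ℝ} (h : ∀ t : ℝ, t * D ≤ C * t ^ 2) : D = 0 := by
  by_contra hD
  have hC : 0 < |C| + 1 := by positivity
  have ht := h (D / (|C| + 1))
  have hCD : C * D ^ 2 ≤ |C| * D ^ 2 := mul_le_mul_of_nonneg_right (le_abs_self C) (sq_nonneg D)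
  rw [div_pow, mul_div_assoc', div_mul_eq_mul_div, div_le_div_iff₀ hC (by positivity)] at ht
  nlinarith [mul_le_mul_of_nonneg_right hCD hC.le, mul_pos hC (sq_pos_of_ne_zero hD)]

section Jfun

variable {α : Type*} [MeasurableSpace α] {μ : Measure α}
  {X : Type*} [NormedAddCommGroup X] [InnerProductSpace ℝ X] (T : X →ₗ[ℝ] Lp ℝ 2 μ)

theorem Jfun_eq_sub (a b a' b' : ℝ) (x : X) :
    Jfun T a' b' x = Jfun T a b x
      - ((a' - a) * ‖Lp.posPart (T x)‖ ^ 2 + (b' - b) * ‖Lp.negPart (T x)‖ ^ 2) / 2 := by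
  unfold Jfun
  ring

theorem Jfun_antitone {a b a' b' : ℝ} (ha : a ≤ a') (hb : b ≤ b') (x : X) :
    Jfun T a' b' x ≤ Jfun T a b x := by
  rw [Jfun_eq_sub T a b]
  nlinarith [sq_nonneg ‖Lp.posPart (T x)‖, sq_nonneg ‖Lp.negPart (T x)‖]

theorem Jfun_self (a : ℝ) (x : X) : Jfun T a a x = (⟪x, x⟫ - a * ‖T x‖ ^ 2) / 2 := by
  rw [Jfun, ← Lp.norm_posPart_sq_add_norm_negPart_sq (T x)]
  ring

theorem inner_eq_of_forall_Jfun_add_smul_le {a b : ℝ} (ha : 0 ≤ a) (hb : 0 ≤ b) {w y : X}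
    (hmax : ∀ t : ℝ, Jfun T a b (w + t • y) ≤ Jfun T a b w) :
    ⟪w, y⟫ = a * ⟪Lp.posPart (T w), T y⟫ - b * ⟪Lp.negPart (T w), T y⟫ := by
  set P := Lp.posPart (T w)
  set N := Lp.negPart (T w)
  -- `‖(f + g)⁺‖ ≤ ‖f⁺ + g‖` bounds `t ↦ J(w + t • y)` below by a quadratic whose slope at `0` is
  -- the difference of the two sides; maximality at `t = 0` forces that slope to vanish.
  suffices ∀ t : ℝ, t * (⟪w, y⟫ - (a * ⟪P, T y⟫ - b * ⟪N, T y⟫))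
      ≤ ((a + b) * ‖T y‖ ^ 2 - ⟪y, y⟫) / 2 * t ^ 2 by
    linarith [eq_zero_of_forall_mul_le_mul_sq this]
  intro t
  have hP : ‖Lp.posPart (T w + t • T y)‖ ^ 2 ≤ ‖P‖ ^ 2 + 2 * t * ⟪P, T y⟫ + t ^ 2 * ‖T y‖ ^ 2 := by
    calc _ ≤ ‖P + t • T y‖ ^ 2 := pow_le_pow_left₀ (norm_nonneg _) (Lp.norm_posPart_add_le _ _) 2
      _ = _ := by
        rw [norm_add_sq_real, real_inner_smul_right, norm_smul, mul_pow, Real.norm_eq_abs, sq_abs]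
        ring
  have hN : ‖Lp.negPart (T w + t • T y)‖ ^ 2 ≤ ‖N‖ ^ 2 - 2 * t * ⟪N, T y⟫ + t ^ 2 * ‖T y‖ ^ 2 := by
    calc _ ≤ ‖N - t • T y‖ ^ 2 := pow_le_pow_left₀ (norm_nonneg _) (Lp.norm_negPart_add_le _ _) 2
      _ = _ := by
        rw [norm_sub_sq_real, real_inner_smul_right, norm_smul, mul_pow, Real.norm_eq_abs, sq_abs]
        ring
  have h := hmax t
  simp only [Jfun, map_add, map_smul, real_inner_add_add_self, real_inner_smul_left,
    real_inner_smul_right] at h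
  nlinarith [mul_le_mul_of_nonneg_left hP ha, mul_le_mul_of_nonneg_left hN hb]

theorem Jfun_le_Jfun_add (a b a' b' : ℝ) (x : X) :
    Jfun T a' b' x ≤ Jfun T a b x + (|a' - a| + |b' - b|) / 2 * ‖T x‖ ^ 2 := by
  rw [Jfun_eq_sub T a b, ← Lp.norm_posPart_sq_add_norm_negPart_sq (T x)]
  nlinarith [neg_abs_le (a' - a), neg_abs_le (b' - b), sq_nonneg ‖Lp.posPart (T x)‖,
    sq_nonneg ‖Lp.negPart (T x)‖, abs_nonneg (a' - a), abs_nonneg (b' - b)]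

end Jfun

theorem exists_pos_le_of_tendsto_subseq {X E : Type*} [NormedAddCommGroup X]
    [NormedAddCommGroup E] {T : X → E}
    (hcpt : ∀ (u : ℕ → X) (C : ℝ), (∀ j, ‖u j‖ ≤ C) →
      ∃ (w : E) (σ : ℕ → ℕ), StrictMono σ ∧ Tendsto (fun j => ‖T (u (σ j)) - w‖) atTop (𝓝 0))
    {F : E → ℝ} (hF : Continuous F) (hFpos : ∀ f, f ≠ 0 → 0 < F f)
    {S : Set X} {C : ℝ} (hSC : ∀ x ∈ S, ‖x‖ ≤ C) (hST : ∀ x ∈ S, 1 ≤ ‖T x‖) :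
    ∃ γ > 0, ∀ x ∈ S, γ ≤ F (T x) := by
  by_contra! h
  choose u huS hu using fun j : ℕ => h (1 / ((j : ℝ) + 1)) Nat.one_div_pos_of_nat
  obtain ⟨z, σ, hσ, hz⟩ := hcpt u C fun j => hSC _ (huS j)
  rw [← tendsto_iff_norm_sub_tendsto_zero] at hz
  have hz0 : z ≠ 0 := by
    refine norm_pos_iff.1 (zero_lt_one.trans_le ?_)
    exact ge_of_tendsto' hz.norm fun j => hST _ (huS _)
  have hFz : F z ≤ 0 :=
    le_of_tendsto_of_tendsto' ((hF.tendsto z).comp hz)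
      (tendsto_one_div_add_atTop_nhds_zero_nat.comp hσ.tendsto_atTop) fun j => (hu (σ j)).le
  exact (hFpos z hz0).not_ge hFz

theorem sq_div_le_norm_sq {E : Type*} [NormedAddCommGroup E] [InnerProductSpace ℝ E]
    {g h : E} {c : ℝ} (hc : 0 ≤ c) (hch : c ≤ ⟪g, h⟫) : c ^ 2 / (‖g‖ ^ 2 + 1) ≤ ‖h‖ ^ 2 := by
  have hgh : c ≤ ‖g‖ * ‖h‖ := hch.trans (real_inner_le_norm g h)
  rw [div_le_iff₀ (by positivity)]
  nlinarith [pow_le_pow_left₀ hc hgh 2, sq_nonneg ‖h‖]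

theorem sInf_setOf_exists_eq_iInf {ι : Type*} (p : ι → Prop) (f : ι → ℝ) :
    sInf {r | ∃ i, p i ∧ r = f i} = ⨅ i : {i // p i}, f i := by
  congr 1
  ext r
  simp [eq_comm]

section Reduction

variable {α : Type*} [MeasurableSpace α] {μ : Measure α}
  {X : Type*} [NormedAddCommGroup X] [InnerProductSpace ℝ X] {T : X →ₗ[ℝ] Lp ℝ 2 μ}
  {V₁ V₂ : Submodule ℝ X}

theorem inner_self_add_of_orth (horth : ∀ u ∈ V₁, ∀ v ∈ V₂, ⟪u, v⟫ = 0 ∧ ⟪T u, T v⟫ = 0)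
    (u : V₁) (v : V₂) : ⟪(u : X) + v, (u : X) + v⟫ = ⟪(u : X), u⟫ + ⟪(v : X), v⟫ := by
  rw [real_inner_add_add_self, (horth u u.2 v v.2).1]
  ring

theorem norm_T_add_sq_of_orth (horth : ∀ u ∈ V₁, ∀ v ∈ V₂, ⟪u, v⟫ = 0 ∧ ⟪T u, T v⟫ = 0)
    (u : V₁) (v : V₂) : ‖T ((u : X) + v)‖ ^ 2 = ‖T u‖ ^ 2 + ‖T v‖ ^ 2 := by
  rw [map_add, norm_add_sq_real, (horth u u.2 v v.2).2]
  ring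

theorem Jfun_self_add (horth : ∀ u ∈ V₁, ∀ v ∈ V₂, ⟪u, v⟫ = 0 ∧ ⟪T u, T v⟫ = 0)
    (a : ℝ) (u : V₁) (v : V₂) : Jfun T a a (u + v) = Jfun T a a u + Jfun T a a v := by
  rw [Jfun_self, Jfun_self, Jfun_self, inner_self_add_of_orth horth, norm_T_add_sq_of_orth horth]
  ring

variable (T) in
/-- The paper's `J̃_{a,b}`. -/
noncomputable def reducedJfun (M : ℝ → ℝ → V₂ → V₁) (a b : ℝ) (v : V₂) : ℝ :=
  Jfun T a b (M a b v + v)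

variable (T) in
/-- The paper's `m(a,b)`. -/
noncomputable def reducedLevel (M : ℝ → ℝ → V₂ → V₁) (a b : ℝ) : ℝ :=
  ⨅ v : {v : V₂ // ‖T v‖ = 1}, reducedJfun T M a b v

variable {M : ℝ → ℝ → V₂ → V₁} {a b lk lk1 : ℝ}

theorem half_sub_le_reducedJfun (hab : a ≤ b)
    (hM : ∀ (v : V₂) (u : V₁), Jfun T a b (u + v) ≤ Jfun T a b (M a b v + v)) (v : V₂) :
    (⟪(v : X), v⟫ - b * ‖T v‖ ^ 2) / 2 ≤ reducedJfun T M a b v :=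
  calc _ = Jfun T b b v := (Jfun_self T b v).symm
    _ ≤ Jfun T a b v := Jfun_antitone T hab le_rfl v
    _ = Jfun T a b ((0 : V₁) + v) := by rw [Submodule.coe_zero, zero_add]
    _ ≤ _ := hM v 0

theorem sub_mul_norm_sq_T_le (horth : ∀ u ∈ V₁, ∀ v ∈ V₂, ⟪u, v⟫ = 0 ∧ ⟪T u, T v⟫ = 0)
    (hV₁ : ∀ u ∈ V₁, ⟪u, u⟫ ≤ lk * ‖T u‖ ^ 2) (hab : a ≤ b)
    (hM : ∀ (v : V₂) (u : V₁), Jfun T a b (u + v) ≤ Jfun T a b (M a b v + v)) (v : V₂) :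
    (a - lk) * ‖T (M a b v)‖ ^ 2 ≤ (b - a) * ‖T v‖ ^ 2 := by
  have hlow := half_sub_le_reducedJfun hab hM v
  have hup : reducedJfun T M a b v ≤ Jfun T a a (M a b v) + Jfun T a a v :=
    (Jfun_antitone T le_rfl hab _).trans (Jfun_self_add horth a _ v).le
  have hV := hV₁ _ (M a b v).2
  rw [Jfun_self, Jfun_self] at hup
  linarith

theorem lk1_sub_le_reducedJfun (hV₂ : ∀ v ∈ V₂, lk1 * ‖T v‖ ^ 2 ≤ ⟪v, v⟫) (hab : a ≤ b)
    (hM : ∀ (v : V₂) (u : V₁), Jfun T a b (u + v) ≤ Jfun T a b (M a b v + v))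
    (v : {v : V₂ // ‖T v‖ = 1}) : (lk1 - b) / 2 ≤ reducedJfun T M a b v := by
  have h := half_sub_le_reducedJfun hab hM v
  have hv := hV₂ _ v.1.2
  rw [v.2] at h hv
  linarith

theorem bddBelow_range_reducedJfun (hV₂ : ∀ v ∈ V₂, lk1 * ‖T v‖ ^ 2 ≤ ⟪v, v⟫) (hab : a ≤ b)
    (hM : ∀ (v : V₂) (u : V₁), Jfun T a b (u + v) ≤ Jfun T a b (M a b v + v)) :
    BddBelow (Set.range fun v : {v : V₂ // ‖T v‖ = 1} => reducedJfun T M a b v) :=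
  ⟨(lk1 - b) / 2, by rintro _ ⟨v, rfl⟩; exact lk1_sub_le_reducedJfun hV₂ hab hM v⟩

theorem reducedLevel_le_add [Nonempty {v : V₂ // ‖T v‖ = 1}]
    (horth : ∀ u ∈ V₁, ∀ v ∈ V₂, ⟪u, v⟫ = 0 ∧ ⟪T u, T v⟫ = 0)
    (hV₁ : ∀ u ∈ V₁, ⟪u, u⟫ ≤ lk * ‖T u‖ ^ 2) (hV₂ : ∀ v ∈ V₂, lk1 * ‖T v‖ ^ 2 ≤ ⟪v, v⟫)
    (hM : ∀ a b : ℝ, lk < a → a ≤ b → ∀ (v : V₂) (u : V₁),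
      Jfun T a b (u + v) ≤ Jfun T a b (M a b v + v))
    {a' b' : ℝ} (ha : lk < a) (hab : a ≤ b) (ha' : lk < a') (hab' : a' ≤ b') :
    reducedLevel T M a' b' ≤
      reducedLevel T M a b + dist (a', b') (a, b) * (1 + (b' - a') / (a' - lk)) := by
  have hd : (|a' - a| + |b' - b|) / 2 ≤ dist (a', b') (a, b) := by
    rw [Prod.dist_eq, Real.dist_eq, Real.dist_eq]
    linarith [le_max_left |a' - a| |b' - b|, le_max_right |a' - a| |b' - b|]
  suffices ∀ v : {v : V₂ // ‖T v‖ = 1}, reducedLevel T M a' b' -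
      dist (a', b') (a, b) * (1 + (b' - a') / (a' - lk)) ≤ reducedJfun T M a b v by
    have h : _ ≤ reducedLevel T M a b := le_ciInf this
    linarith
  intro v
  have hTx : ‖T ((M a' b' v : X) + v)‖ ^ 2 ≤ 1 + (b' - a') / (a' - lk) := by
    have h := sub_mul_norm_sq_T_le horth hV₁ hab' (hM a' b' ha' hab') v
    rw [v.2, one_pow, mul_one, mul_comm, ← le_div_iff₀ (sub_pos.2 ha')] at h
    rw [norm_T_add_sq_of_orth horth, v.2]
    linarith
  have hshift := Jfun_le_Jfun_add T a b a' b' ((M a' b' v : X) + v)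
  have hmax := hM a b ha hab v (M a' b' v)
  have hle := ciInf_le (bddBelow_range_reducedJfun hV₂ hab' (hM a' b' ha' hab')) v
  have hprod := mul_le_mul hd hTx (sq_nonneg _) dist_nonneg
  unfold reducedLevel reducedJfun at *
  linarith

theorem reducedLevel_locally_lipschitz [Nonempty {v : V₂ // ‖T v‖ = 1}]
    (horth : ∀ u ∈ V₁, ∀ v ∈ V₂, ⟪u, v⟫ = 0 ∧ ⟪T u, T v⟫ = 0)
    (hV₁ : ∀ u ∈ V₁, ⟪u, u⟫ ≤ lk * ‖T u‖ ^ 2) (hV₂ : ∀ v ∈ V₂, lk1 * ‖T v‖ ^ 2 ≤ ⟪v, v⟫)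
    (hM : ∀ a b : ℝ, lk < a → a ≤ b → ∀ (v : V₂) (u : V₁),
      Jfun T a b (u + v) ≤ Jfun T a b (M a b v + v))
    (p : ℝ × ℝ) (hp : lk < p.1) (hpp : p.1 ≤ p.2) :
    ∃ ε > 0, ∃ C : ℝ, 0 ≤ C ∧ ∀ q q' : ℝ × ℝ, lk < q.1 → q.1 ≤ q.2 → lk < q'.1 → q'.1 ≤ q'.2 →
      dist q p < ε → dist q' p < ε →
        |reducedLevel T M q'.1 q'.2 - reducedLevel T M q.1 q.2| ≤ C * dist q' q := by
  set ε := min ((p.1 - lk) / 2) 1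
  have hε : 0 < ε := lt_min (by linarith) one_pos
  have hW : ∀ q : ℝ × ℝ, lk < q.1 → q.1 ≤ q.2 → dist q p < ε →
      1 + (q.2 - q.1) / (q.1 - lk) ≤ 1 + (p.2 + 1 - lk) / ((p.1 - lk) / 2) := by
    intro q hq hqq hqp
    rw [Prod.dist_eq, max_lt_iff, Real.dist_eq, Real.dist_eq, abs_lt, abs_lt] at hqp
    have h₁ := hqp.1.1.trans_le' (neg_le_neg (min_le_left _ _))
    have h₂ := hqp.2.2.trans_le (min_le_right _ _)
    gcongr 1 + ?_
    exact div_le_div₀ (by linarith) (by linarith) (by linarith) (by linarith)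
  have hC : 0 ≤ 1 + (p.2 + 1 - lk) / ((p.1 - lk) / 2) :=
    add_nonneg zero_le_one (div_nonneg (by linarith) (by linarith))
  refine ⟨ε, hε, _, hC, fun q q' hq hqq hq' hqq' hqp hq'p => abs_sub_le_iff.2 ⟨?_, ?_⟩⟩
  · have h := reducedLevel_le_add horth hV₁ hV₂ hM hq hqq hq' hqq'
    have hq'W := mul_le_mul_of_nonneg_left (hW q' hq' hqq' hq'p) (dist_nonneg (x := q') (y := q))
    rw [Prod.mk.eta, Prod.mk.eta] at h
    linarith
  · have h := reducedLevel_le_add horth hV₁ hV₂ hM hq' hqq' hq hqq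
    have hqW := mul_le_mul_of_nonneg_left (hW q hq hqq hqp) (dist_nonneg (x := q') (y := q))
    rw [Prod.mk.eta, Prod.mk.eta, dist_comm] at h
    linarith

theorem sub_mul_inner_posPart_eq {lam : ℝ} (ha : 0 ≤ a) (hb : 0 ≤ b)
    (hM : ∀ (v : V₂) (u : V₁), Jfun T a b (u + v) ≤ Jfun T a b (M a b v + v))
    (φ : V₁) (hφ : ∀ ψ : X, ⟪(φ : X), ψ⟫ = lam * ⟪T φ, T ψ⟫) (v : V₂) :
    (a - lam) * ⟪T φ, Lp.posPart (T (M a b v + v))⟫ =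
      (b - lam) * ⟪T φ, Lp.negPart (T (M a b v + v))⟫ := by
  have hmax : ∀ t : ℝ, Jfun T a b ((M a b v : X) + v + t • φ) ≤ Jfun T a b (M a b v + v) := by
    intro t
    simpa only [Submodule.coe_add, Submodule.coe_smul, add_right_comm] using
      hM v (M a b v + t • φ)
  have h := inner_eq_of_forall_Jfun_add_smul_le T ha hb hmax
  rw [real_inner_comm, hφ, ← Lp.inner_posPart_sub_inner_negPart, real_inner_comm (T φ),
    real_inner_comm (T φ)] at h
  linarith

theorem exists_pos_le_norm_sq_posPart_negPart
    (horth : ∀ u ∈ V₁, ∀ v ∈ V₂, ⟪u, v⟫ = 0 ∧ ⟪T u, T v⟫ = 0)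
    (hV₁ : ∀ u ∈ V₁, ⟪u, u⟫ ≤ lk * ‖T u‖ ^ 2) {lam : ℝ} (hlam : 0 < lam) (hlamk : lam ≤ lk)
    (ha : lk < a) (hab : a ≤ b)
    (hM : ∀ (v : V₂) (u : V₁), Jfun T a b (u + v) ≤ Jfun T a b (M a b v + v))
    (φ : V₁) (hφpos : ∀ᵐ x ∂μ, 0 < (T φ) x) (hφ : ∀ ψ : X, ⟪(φ : X), ψ⟫ = lam * ⟪T φ, T ψ⟫)
    (hcpt : ∀ (u : ℕ → X) (C : ℝ), (∀ j, ‖u j‖ ≤ C) →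
      ∃ (w : Lp ℝ 2 μ) (σ : ℕ → ℕ), StrictMono σ ∧ Tendsto (fun j => ‖T (u (σ j)) - w‖) atTop (𝓝 0))
    (R : ℝ) :
    ∃ δ > 0, ∀ v : V₂, ‖T v‖ = 1 → ⟪(v : X), v⟫ ≤ R →
      δ ≤ ‖Lp.posPart (T (M a b v + v))‖ ^ 2 ∧ δ ≤ ‖Lp.negPart (T (M a b v + v))‖ ^ 2 := by
  have hTM : ∀ v : V₂, ‖T v‖ = 1 → ‖T (M a b v)‖ ^ 2 ≤ (b - a) / (a - lk) := fun v hv => by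
    have h := sub_mul_norm_sq_T_le horth hV₁ hab hM v
    rwa [hv, one_pow, mul_one, mul_comm, ← le_div_iff₀ (sub_pos.2 ha)] at h
  obtain ⟨γ, hγ, hγS⟩ := exists_pos_le_of_tendsto_subseq hcpt
    (F := fun f => ⟪T φ, Lp.posPart f⟫ + ⟪T φ, Lp.negPart f⟫)
    ((continuous_const.inner Lp.continuous_posPart).add
      (continuous_const.inner Lp.continuous_negPart))
    (fun f hf => Lp.inner_posPart_add_inner_negPart_pos hφpos hf)
    (S := {x | ∃ v : V₂, ‖T v‖ = 1 ∧ ⟪(v : X), v⟫ ≤ R ∧ x = M a b v + v})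
    (C := √(lk * ((b - a) / (a - lk)) + R))
    (by
      rintro _ ⟨v, hv, hvR, rfl⟩
      refine Real.le_sqrt_of_sq_le ?_
      rw [← real_inner_self_eq_norm_sq, inner_self_add_of_orth horth]
      have := mul_le_mul_of_nonneg_left (hTM v hv) (hlam.le.trans hlamk)
      linarith [hV₁ _ (M a b v).2])
    (by
      rintro _ ⟨v, hv, -, rfl⟩
      rw [← one_le_sq_iff₀ (norm_nonneg _), norm_T_add_sq_of_orth horth, hv]
      linarith [sq_nonneg ‖T (M a b v)‖])
  have hφ' : 0 ≤ᵐ[μ] T φ := hφpos.mono fun _ h => h.le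
  set c := (a - lam) * γ / (2 * (b - lam))
  have hc : 0 < c := div_pos (mul_pos (by linarith) hγ) (by linarith)
  refine ⟨c ^ 2 / (‖T φ‖ ^ 2 + 1), by positivity, fun v hv hvR => ?_⟩
  have hsum := hγS _ ⟨v, hv, hvR, rfl⟩
  have hfoc := sub_mul_inner_posPart_eq (by linarith) (by linarith) hM φ hφ v
  have hN := Lp.inner_nonneg_of_ae_nonneg hφ' (Lp.negPart_nonneg (T (M a b v + v)))
  set P := ⟪T φ, Lp.posPart (T (M a b v + v))⟫
  set N := ⟪T φ, Lp.negPart (T (M a b v + v))⟫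
  have hNP : N ≤ P := by nlinarith
  have hcN : c ≤ N := by
    rw [div_le_iff₀ (by linarith)]
    nlinarith
  exact ⟨sq_div_le_norm_sq hc.le (by linarith), sq_div_le_norm_sq hc.le hcN⟩

theorem reducedLevel_lt_of_le_of_ne [Nonempty {v : V₂ // ‖T v‖ = 1}]
    (horth : ∀ u ∈ V₁, ∀ v ∈ V₂, ⟪u, v⟫ = 0 ∧ ⟪T u, T v⟫ = 0)
    (hV₁ : ∀ u ∈ V₁, ⟪u, u⟫ ≤ lk * ‖T u‖ ^ 2) (hV₂ : ∀ v ∈ V₂, lk1 * ‖T v‖ ^ 2 ≤ ⟪v, v⟫)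
    {lam : ℝ} (hlam : 0 < lam) (hlamk : lam ≤ lk)
    (hM : ∀ a b : ℝ, lk < a → a ≤ b → ∀ (v : V₂) (u : V₁),
      Jfun T a b (u + v) ≤ Jfun T a b (M a b v + v))
    (φ : V₁) (hφpos : ∀ᵐ x ∂μ, 0 < (T φ) x) (hφ : ∀ ψ : X, ⟪(φ : X), ψ⟫ = lam * ⟪T φ, T ψ⟫)
    (hcpt : ∀ (u : ℕ → X) (C : ℝ), (∀ j, ‖u j‖ ≤ C) →
      ∃ (w : Lp ℝ 2 μ) (σ : ℕ → ℕ), StrictMono σ ∧ Tendsto (fun j => ‖T (u (σ j)) - w‖) atTop (𝓝 0))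
    {a₁ b₁ a₂ b₂ : ℝ} (ha₁ : lk < a₁) (hab₁ : a₁ ≤ b₁) (hab₂ : a₂ ≤ b₂) (ha : a₁ ≤ a₂)
    (hb : b₁ ≤ b₂) (hne : (a₁, b₁) ≠ (a₂, b₂)) :
    reducedLevel T M a₂ b₂ < reducedLevel T M a₁ b₁ := by
  have ha₂ : lk < a₂ := ha₁.trans_le ha
  set m₁ := reducedLevel T M a₁ b₁
  obtain ⟨δ, hδ, hδv⟩ := exists_pos_le_norm_sq_posPart_negPart horth hV₁ hlam hlamk ha₂ hab₂
    (hM a₂ b₂ ha₂ hab₂) φ hφpos hφ hcpt (2 * (m₁ + 1) + b₂)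
  set κ := ((a₂ - a₁) + (b₂ - b₁)) * δ / 2 with hκdef
  have hκ : 0 < κ := by
    have : 0 < (a₂ - a₁) + (b₂ - b₁) := by
      rcases ha.lt_or_eq with ha' | rfl
      · linarith
      rcases hb.lt_or_eq with hb' | rfl
      · linarith
      exact absurd rfl hne
    positivity
  obtain ⟨v, hv⟩ : ∃ v : {v : V₂ // ‖T v‖ = 1}, reducedJfun T M a₁ b₁ v < m₁ + min 1 κ :=
    exists_lt_of_ciInf_lt (lt_add_of_pos_right m₁ (lt_min one_pos hκ))
  have hJ₁ : Jfun T a₁ b₁ (M a₂ b₂ v + v) ≤ reducedJfun T M a₁ b₁ v := hM a₁ b₁ ha₁ hab₁ v _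
  have hJ₂ := (Jfun_antitone T ha hb _).trans hJ₁
  have hvR : ⟪(v : X), v⟫ ≤ 2 * (m₁ + 1) + b₂ := by
    have h := half_sub_le_reducedJfun hab₂ (hM a₂ b₂ ha₂ hab₂) v
    rw [v.2, one_pow, mul_one] at h
    linarith [min_le_left 1 κ, show reducedJfun T M a₂ b₂ v = Jfun T a₂ b₂ (M a₂ b₂ v + v) from rfl]
  obtain ⟨hP, hN⟩ := hδv v.1 v.2 hvR
  have hdrop : reducedJfun T M a₂ b₂ v ≤ reducedJfun T M a₁ b₁ v - κ := by
    rw [reducedJfun, Jfun_eq_sub T a₁ b₁ a₂ b₂]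
    nlinarith [mul_le_mul_of_nonneg_left hP (sub_nonneg.2 ha),
      mul_le_mul_of_nonneg_left hN (sub_nonneg.2 hb)]
  calc reducedLevel T M a₂ b₂ ≤ reducedJfun T M a₂ b₂ v :=
        ciInf_le (bddBelow_range_reducedJfun hV₂ hab₂ (hM a₂ b₂ ha₂ hab₂)) v
    _ < m₁ := by linarith [min_le_right 1 κ]

theorem reducedLevel_self (horth : ∀ u ∈ V₁, ∀ v ∈ V₂, ⟪u, v⟫ = 0 ∧ ⟪T u, T v⟫ = 0)
    (hV₁ : ∀ u ∈ V₁, ⟪u, u⟫ ≤ lk * ‖T u‖ ^ 2) (hV₂ : ∀ v ∈ V₂, lk1 * ‖T v‖ ^ 2 ≤ ⟪v, v⟫)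
    (ha : lk < a) (hM : ∀ (v : V₂) (u : V₁), Jfun T a a (u + v) ≤ Jfun T a a (M a a v + v))
    (φ : V₂) (hφn : ‖T φ‖ = 1) (hφ : ⟪(φ : X), φ⟫ = lk1) :
    reducedLevel T M a a = (lk1 - a) / 2 := by
  have : Nonempty {v : V₂ // ‖T v‖ = 1} := ⟨⟨φ, hφn⟩⟩
  refine le_antisymm ((ciInf_le (bddBelow_range_reducedJfun hV₂ le_rfl hM) ⟨φ, hφn⟩).trans ?_)
    (le_ciInf (lk1_sub_le_reducedJfun hV₂ le_rfl hM))
  change Jfun T a a (M a a φ + φ) ≤ _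
  rw [Jfun_self_add horth, Jfun_self, Jfun_self, hφ, hφn]
  nlinarith [hV₁ _ (M a a φ).2, sq_nonneg ‖T (M a a φ)‖]

end Reduction

theorem stmt_11_general
    {n : ℕ}
    {Ωs : Set (EuclideanSpace ℝ (Fin n))}
    {X₀ : Type*} [NormedAddCommGroup X₀] [InnerProductSpace ℝ X₀]
    (T : X₀ →ₗ[ℝ] Lp ℝ 2 (volume.restrict Ωs))
    {lk lk1 : ℝ}
    (V₁ V₂ : Submodule ℝ X₀)
    (hV₂ : ∀ v : X₀, v ∈ V₂ ↔ ∀ u ∈ V₁, ⟪u, v⟫ = 0 ∧ ⟪T u, T v⟫ = 0)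
    (hV₁b : ∀ u ∈ V₁, ⟪u, u⟫ ≤ lk * ‖T u‖ ^ 2)
    (hV₂b : ∀ v ∈ V₂, lk1 * ‖T v‖ ^ 2 ≤ ⟪v, v⟫)
    (lam1 : ℝ) (hlam1 : 0 < lam1)
    (hlam1k : lam1 ≤ lk) (φ₁ : V₁)
    (hφ₁pos : ∀ᵐ x ∂(volume.restrict Ωs), 0 < (T (φ₁ : X₀)) x)
    (hφ₁eig : ∀ ψ : X₀, ⟪(φ₁ : X₀), ψ⟫ = lam1 * ⟪T (φ₁ : X₀), T ψ⟫)
    (φk1 : V₂) (hφk1n : ‖T (φk1 : X₀)‖ = 1)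
    (hφk1e : ∀ ψ : X₀, ⟪(φk1 : X₀), ψ⟫ = lk1 * ⟪T (φk1 : X₀), T ψ⟫)
    (hcpt : ∀ (u : ℕ → X₀) (C : ℝ), (∀ j, ‖u j‖ ≤ C) →
      ∃ (w : Lp ℝ 2 (volume.restrict Ωs)) (σ : ℕ → ℕ), StrictMono σ ∧
        Tendsto (fun j => ‖T (u (σ j)) - w‖) atTop (nhds 0))
    (M : ℝ → ℝ → V₂ → V₁)
    (hM : ∀ a b : ℝ, lk < a → a ≤ b → ∀ (v : V₂) (u : V₁),
      Jfun T a b ((u : X₀) + (v : X₀)) ≤ Jfun T a b ((M a b v : X₀) + (v : X₀)))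
    (m : ℝ → ℝ → ℝ)
    (hm : ∀ a b : ℝ, lk < a → a ≤ b → m a b =
      sInf {r : ℝ | ∃ v : V₂, ‖T (v : X₀)‖ = 1 ∧ r = Jfun T a b ((M a b v : X₀) + (v : X₀))})
    :
    (∀ p ∈ {p : ℝ × ℝ | lk < p.1 ∧ p.1 < lk1 ∧ p.1 ≤ p.2}, ∃ ε > 0, ∃ C : ℝ, 0 ≤ C ∧
      ∀ q ∈ {p : ℝ × ℝ | lk < p.1 ∧ p.1 < lk1 ∧ p.1 ≤ p.2},
      ∀ q' ∈ {p : ℝ × ℝ | lk < p.1 ∧ p.1 < lk1 ∧ p.1 ≤ p.2},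
        dist q p < ε → dist q' p < ε → |m q'.1 q'.2 - m q.1 q.2| ≤ C * dist q' q) ∧
    (∀ a₁ b₁ a₂ b₂ : ℝ, lk < a₁ → a₁ < lk1 → a₁ ≤ b₁ → lk < a₂ → a₂ < lk1 → a₂ ≤ b₂ →
      a₁ ≤ a₂ → b₁ ≤ b₂ → (a₁, b₁) ≠ (a₂, b₂) → m a₂ b₂ < m a₁ b₁) ∧
    (∀ a : ℝ, lk < a → a < lk1 → m a a = (lk1 - a) / 2 ∧ 0 < m a a) := by
  have horth : ∀ u ∈ V₁, ∀ v ∈ V₂, ⟪u, v⟫ = 0 ∧ ⟪T u, T v⟫ = 0 :=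
    fun u hu v hv => (hV₂ v).1 hv u hu
  have hm' : ∀ a b, lk < a → a ≤ b → m a b = reducedLevel T M a b := fun a b ha hab =>
    (hm a b ha hab).trans (sInf_setOf_exists_eq_iInf _ _)
  have : Nonempty {v : V₂ // ‖T v‖ = 1} := ⟨⟨φk1, hφk1n⟩⟩
  refine ⟨?_, ?_, fun a ha ha' => ?_⟩
  · rintro p ⟨hp, -, hpp⟩
    obtain ⟨ε, hε, C, hC, hlip⟩ := reducedLevel_locally_lipschitz horth hV₁b hV₂b hM p hp hpp
    refine ⟨ε, hε, C, hC, fun q ⟨hq, _, hqq⟩ q' ⟨hq', _, hqq'⟩ hqp hq'p => ?_⟩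
    rw [hm' _ _ hq hqq, hm' _ _ hq' hqq']
    exact hlip q q' hq hqq hq' hqq' hqp hq'p
  · intro a₁ b₁ a₂ b₂ ha₁ _ hab₁ ha₂ _ hab₂ ha hb hne
    rw [hm' a₁ b₁ ha₁ hab₁, hm' a₂ b₂ ha₂ hab₂]
    exact reducedLevel_lt_of_le_of_ne horth hV₁b hV₂b hlam1 hlam1k hM φ₁ hφ₁pos hφ₁eig hcpt
      ha₁ hab₁ hab₂ ha hb hne
  · have hφk1 : ⟪(φk1 : X₀), φk1⟫ = lk1 := by
      rw [hφk1e, real_inner_self_eq_norm_sq, hφk1n, one_pow, mul_one]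
    rw [hm' a a ha le_rfl,
      reducedLevel_self horth hV₁b hV₂b ha (hM a a ha le_rfl) φk1 hφk1n hφk1]
    exact ⟨rfl, by linarith⟩

theorem stmt_11
    {n : ℕ} {s : ℝ} (hs0 : 0 < s) (hs1 : s < 1) (hns : 2 * s < (n : ℝ))
    {Ωs : Set (EuclideanSpace ℝ (Fin n))} (hΩb : Bornology.IsBounded Ωs)
    (hΩm : MeasurableSet Ωs)
    {K : EuclideanSpace ℝ (Fin n) → ℝ} (hKpos : ∀ x, x ≠ 0 → 0 < K x)
    (hK1 : Integrable (fun x => min (‖x‖ ^ 2) 1 * K x))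
    (hK2 : ∃ lam > 0, ∀ x, x ≠ 0 → lam * ‖x‖ ^ (-((n : ℝ) + 2 * s)) ≤ K x)
    (hK3 : ∀ x, K (-x) = K x)
    {X₀ : Type*} [NormedAddCommGroup X₀] [InnerProductSpace ℝ X₀] [CompleteSpace X₀]
    (T : X₀ →ₗ[ℝ] Lp ℝ 2 (volume.restrict Ωs)) (hT : Function.Injective T)
    {lk lk1 : ℝ} (hlk0 : 0 < lk) (hlk : lk < lk1)
    (V₁ V₂ : Submodule ℝ X₀) [FiniteDimensional ℝ V₁]
    (hV₂ : ∀ v : X₀, v ∈ V₂ ↔ ∀ u ∈ V₁, ⟪u, v⟫ = 0 ∧ ⟪T u, T v⟫ = 0)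
    (hcompl : IsCompl V₁ V₂)
    (hV₁b : ∀ u ∈ V₁, ⟪u, u⟫ ≤ lk * ‖T u‖ ^ 2)
    (hV₂b : ∀ v ∈ V₂, lk1 * ‖T v‖ ^ 2 ≤ ⟪v, v⟫)
    (lam1 : ℝ) (hlam1 : 0 < lam1)
    (hPoin : ∀ u : X₀, lam1 * ‖T u‖ ^ 2 ≤ ⟪u, u⟫)
    (hlam1k : lam1 ≤ lk) (φ₁ : V₁)
    (hφ₁pos : ∀ᵐ x ∂(volume.restrict Ωs), 0 < (T (φ₁ : X₀)) x)
    (hφ₁eig : ∀ ψ : X₀, ⟪(φ₁ : X₀), ψ⟫ = lam1 * ⟪T (φ₁ : X₀), T ψ⟫)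
    (φk1 : V₂) (hφk1n : ‖T (φk1 : X₀)‖ = 1)
    (hφk1e : ∀ ψ : X₀, ⟪(φk1 : X₀), ψ⟫ = lk1 * ⟪T (φk1 : X₀), T ψ⟫)
    (hcpt : ∀ (u : ℕ → X₀) (C : ℝ), (∀ j, ‖u j‖ ≤ C) →
      ∃ (w : Lp ℝ 2 (volume.restrict Ωs)) (σ : ℕ → ℕ), StrictMono σ ∧
        Tendsto (fun j => ‖T (u (σ j)) - w‖) atTop (nhds 0))
    (M : ℝ → ℝ → V₂ → V₁)
    (hM : ∀ a b : ℝ, lk < a → a ≤ b → ∀ (v : V₂) (u : V₁),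
      Jfun T a b ((u : X₀) + (v : X₀)) ≤ Jfun T a b ((M a b v : X₀) + (v : X₀)))
    (m : ℝ → ℝ → ℝ)
    (hm : ∀ a b : ℝ, lk < a → a ≤ b → m a b =
      sInf {r : ℝ | ∃ v : V₂, ‖T (v : X₀)‖ = 1 ∧ r = Jfun T a b ((M a b v : X₀) + (v : X₀))})
    :
    (∀ p ∈ {p : ℝ × ℝ | lk < p.1 ∧ p.1 < lk1 ∧ p.1 ≤ p.2}, ∃ ε > 0, ∃ C : ℝ, 0 ≤ C ∧
      ∀ q ∈ {p : ℝ × ℝ | lk < p.1 ∧ p.1 < lk1 ∧ p.1 ≤ p.2},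
      ∀ q' ∈ {p : ℝ × ℝ | lk < p.1 ∧ p.1 < lk1 ∧ p.1 ≤ p.2},
        dist q p < ε → dist q' p < ε → |m q'.1 q'.2 - m q.1 q.2| ≤ C * dist q' q) ∧
    (∀ a₁ b₁ a₂ b₂ : ℝ, lk < a₁ → a₁ < lk1 → a₁ ≤ b₁ → lk < a₂ → a₂ < lk1 → a₂ ≤ b₂ →
      a₁ ≤ a₂ → b₁ ≤ b₂ → (a₁, b₁) ≠ (a₂, b₂) → m a₂ b₂ < m a₁ b₁) ∧
    (∀ a : ℝ, lk < a → a < lk1 → m a a = (lk1 - a) / 2 ∧ 0 < m a a) :=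
  stmt_11_general T V₁ V₂ hV₂ hV₁b hV₂b lam1 hlam1 hlam1k φ₁ hφ₁pos hφ₁eig φk1 hφk1n hφk1e hcpt M hM
    m hm
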